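/- Let (X, 𝒜, π) be a probability space, T a Markov transition kernel on X preserving π (πT = π), and 1 ≤ p ≤ q real numbers. Assume that for every nonnegative measurable g ∈ L^p(π), ‖Tg‖_{L^q(π)} ≤ ‖g‖_{L^p(π)}. Then for every probability measure μ on X and every integer n ≥ 0, the n-step distribution satisfies H(μT^n | π) ≤ (p/q)^n · H(μ | π), where μT^n denotes the measure obtained by applying the action μ ↦ μT n times. -/

import Mathlib

open MeasureTheory ProbabilityTheory ENNReal Classical

private lemma young_ineq {a : ℝ} (b : ℝ) (ha : 0 ≤ a) :
    a * b ≤ a * Real.log a - a + Real.exp b := by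
  rcases ha.eq_or_lt with h | h
  · simp only [← h, zero_mul, Real.log_zero, sub_zero, zero_sub, neg_zero, zero_add]
    positivity
  · have h1 : b - Real.log a + 1 ≤ Real.exp (b - Real.log a) := Real.add_one_le_exp _
    have h2 : Real.exp (b - Real.log a) = Real.exp b / a := by
      rw [Real.exp_sub, Real.exp_log h]
    have h3 := mul_le_mul_of_nonneg_left h1 ha
    rw [h2] at h3
    have h4 : a * (Real.exp b / a) = Real.exp b := by field_simp
    nlinarith [h3, h4]

private lemma bind_isProb {X : Type*} [MeasurableSpace X] (T : Kernel X X) [IsMarkovKernel T]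
    (μ : Measure X) [IsProbabilityMeasure μ] :
    IsProbabilityMeasure (μ.bind (fun x => T x)) := by
  constructor
  rw [Measure.bind_apply MeasurableSet.univ T.measurable.aemeasurable]
  simp

private lemma core {X : Type*} [MeasurableSpace X] (π : Measure X) [IsProbabilityMeasure π]
    (T : Kernel X X) [IsMarkovKernel T]
    (p q : ℝ) (hp : 1 ≤ p) (hpq : p ≤ q)
    (hHC : ∀ g : X → ℝ, Measurable g → (∀ x, 0 ≤ g x) → MemLp g (ENNReal.ofReal p) π →
      eLpNorm (fun x => ∫ y, g y ∂(T x)) (ENNReal.ofReal q) π ≤ eLpNorm g (ENNReal.ofReal p) π)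
    (μ : Measure X) [IsProbabilityMeasure μ] (hac : μ ≪ π)
    (hint : Integrable (llr μ π) μ)
    (N M : ℝ) (h : X → ℝ) (hh : Measurable h)
    (hlb : ∀ x, -N ≤ h x) (hub : ∀ x, h x ≤ M)
    (hexp : ∫⁻ x, ENNReal.ofReal (Real.exp (h x)) ∂π ≤ ENNReal.ofReal (1 + Real.exp (-N))) :
    ∫ x, h x ∂(μ.bind (fun x => T x))
      ≤ (p/q) * (∫ x, llr μ π x ∂μ - 1 + (1 + Real.exp (-N)) ^ (q/p)) := by
  have hp0 : (0:ℝ) < p := lt_of_lt_of_le one_pos hp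
  have hq0 : (0:ℝ) < q := lt_of_lt_of_le hp0 hpq
  set ν := μ.bind (fun x => T x) with hν
  haveI : IsProbabilityMeasure ν := bind_isProb T μ
  set u : X → ℝ := fun x => ∫ y, h y ∂(T x) with hu_def
  have hu_sm : StronglyMeasurable u := by
    have h0 : StronglyMeasurable (Function.uncurry fun (_ : X) (y : X) => h y) :=
      (hh.comp measurable_snd).stronglyMeasurable
    exact h0.integral_kernel_prod_right
  have hu_meas : Measurable u := hu_sm.measurable
  have hbd : ∀ y, ‖h y‖ ≤ max M N := fun y => by
    rw [Real.norm_eq_abs, abs_le]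
    constructor
    · have := hlb y; have : -(max M N) ≤ -N := neg_le_neg (le_max_right _ _); linarith [hlb y]
    · exact le_trans (hub y) (le_max_left _ _)
  have hint_h : ∀ x : X, Integrable h (T x) := fun x =>
    (integrable_const (max M N)).mono' hh.aestronglyMeasurable
      (Filter.Eventually.of_forall hbd)
  have hu_lb : ∀ x, -N ≤ u x := fun x => by
    have h1 : ∫ (_ : X), (-N) ∂(T x) = -N := by simp
    rw [← h1]
    exact integral_mono (integrable_const _) (hint_h x) (fun y => hlb y)
  have hu_ub : ∀ x, u x ≤ M := fun x => by
    have h1 : ∫ (_ : X), M ∂(T x) = M := by simp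
    rw [← h1]
    exact integral_mono (hint_h x) (integrable_const _) (fun y => hub y)
  have hint_hν : Integrable h ν :=
    (integrable_const (max M N)).mono' hh.aestronglyMeasurable
      (Filter.Eventually.of_forall hbd)
  have hint_uμ : Integrable u μ :=
    (integrable_const (max M N)).mono' hu_sm.aestronglyMeasurable
      (Filter.Eventually.of_forall fun x => by
        rw [Real.norm_eq_abs, abs_le]
        refine ⟨?_, le_trans (hu_ub x) (le_max_left _ _)⟩
        have : -(max M N) ≤ -N := neg_le_neg (le_max_right _ _)
        linarith [hu_lb x])
  -- Step 1 : ∫ h dν = ∫ u dμ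
  have hHN : ∀ y, (0:ℝ) ≤ h y + N := fun y => by linarith [hlb y]
  have hUN : ∀ y, (0:ℝ) ≤ u y + N := fun y => by linarith [hu_lb y]
  have key1 : ∫ x, h x ∂ν = ∫ x, u x ∂μ := by
    have e1 : ∫⁻ x, ENNReal.ofReal (h x + N) ∂ν
        = ∫⁻ x, ∫⁻ y, ENNReal.ofReal (h y + N) ∂(T x) ∂μ :=
      Measure.lintegral_bind T.measurable.aemeasurable (hh.add measurable_const).ennreal_ofReal.aemeasurable
    have e2 : ∀ x, ∫⁻ y, ENNReal.ofReal (h y + N) ∂(T x) = ENNReal.ofReal (u x + N) := by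
      intro x
      have hi : Integrable (fun y => h y + N) (T x) := (hint_h x).add (integrable_const N)
      have h0 : 0 ≤ᵐ[T x] (fun y => h y + N) := Filter.Eventually.of_forall hHN
      have e := ofReal_integral_eq_lintegral_ofReal hi h0
      rw [integral_add (hint_h x) (integrable_const _)] at e
      simp only [integral_const, measure_univ, ENNReal.toReal_one, probReal_univ, one_smul,
        smul_eq_mul, one_mul] at e
      exact e.symm
    have l1 : ∫ x, (h x + N) ∂ν = (∫⁻ x, ENNReal.ofReal (h x + N) ∂ν).toReal :=
      integral_eq_lintegral_of_nonneg_ae (Filter.Eventually.of_forall hHN)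
        ((hh.add measurable_const).aestronglyMeasurable)
    have l2 : ∫ x, (u x + N) ∂μ = (∫⁻ x, ENNReal.ofReal (u x + N) ∂μ).toReal :=
      integral_eq_lintegral_of_nonneg_ae (Filter.Eventually.of_forall hUN)
        ((hu_meas.add measurable_const).aestronglyMeasurable)
    have e3 : ∫ x, (h x + N) ∂ν = ∫ x, (u x + N) ∂μ := by
      rw [l1, l2, e1]
      congr 1
      exact lintegral_congr e2
    rw [integral_add hint_hν (integrable_const N),
      integral_add hint_uμ (integrable_const N)] at e3
    simp only [integral_const, measure_univ, ENNReal.toReal_one, probReal_univ, one_smul,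
      smul_eq_mul, one_mul] at e3
    linarith
  -- Step 2 : ∫ u dμ = ∫ f·u dπ
  set f : X → ℝ := fun x => (μ.rnDeriv π x).toReal with hf_def
  have hf_meas : Measurable f := (Measure.measurable_rnDeriv μ π).ennreal_toReal
  have hf_nn : ∀ x, 0 ≤ f x := fun x => ENNReal.toReal_nonneg
  have key2 : ∫ x, u x ∂μ = ∫ x, f x * u x ∂π := by
    rw [← MeasureTheory.integral_rnDeriv_smul hac (f := u)]
    simp [hf_def, smul_eq_mul]
  -- integrabilities
  have hint_f : Integrable f π := Measure.integrable_toReal_rnDeriv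
  have hint_A : Integrable (fun x => f x * Real.log (f x)) π := by
    have h1 := (MeasureTheory.integrable_rnDeriv_smul_iff hac (f := llr μ π)).mpr hint
    simpa [llr_def, hf_def, smul_eq_mul] using h1
  have hint_fu : Integrable (fun x => f x * u x) π := by
    have := hint_f.bdd_mul (c := max M N) hu_sm.aestronglyMeasurable
      (Filter.Eventually.of_forall fun x => by
        rw [Real.norm_eq_abs, abs_le]
        refine ⟨?_, le_trans (hu_ub x) (le_max_left _ _)⟩
        have : -(max M N) ≤ -N := neg_le_neg (le_max_right _ _)
        linarith [hu_lb x])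
    simpa [mul_comm] using this
  have hint_B : Integrable (fun x => Real.exp ((q/p) * u x)) π := by
    refine (integrable_const (Real.exp ((q/p) * M))).mono'
      ((Real.measurable_exp.comp (measurable_const.mul hu_meas)).aestronglyMeasurable)
      (Filter.Eventually.of_forall fun x => ?_)
    rw [Real.norm_eq_abs, abs_of_pos (Real.exp_pos _)]
    exact Real.exp_le_exp.mpr (mul_le_mul_of_nonneg_left (hu_ub x) (by positivity))
  -- pointwise Young
  have pointwise : ∀ x, f x * u x
      ≤ (p/q) * (f x * Real.log (f x) - f x + Real.exp ((q/p) * u x)) := by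
    intro x
    have h1 := young_ineq ((q/p) * u x) (hf_nn x)
    have h2 := mul_le_mul_of_nonneg_left h1 (le_of_lt (div_pos hp0 hq0))
    have h3 : (p/q) * (f x * ((q/p) * u x)) = f x * u x := by
      field_simp
    linarith [h2, h3.ge]
  have entEq : ∫ x, f x * Real.log (f x) ∂π = ∫ x, llr μ π x ∂μ := by
    rw [← MeasureTheory.integral_rnDeriv_smul hac (f := llr μ π)]
    simp [llr_def, hf_def, smul_eq_mul]
  have hfint1 : ∫ x, f x ∂π = 1 := by
    rw [Measure.integral_toReal_rnDeriv hac]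
    simp
  have int_ineq : ∫ x, f x * u x ∂π
      ≤ (p/q) * (∫ x, llr μ π x ∂μ - 1 + ∫ x, Real.exp ((q/p) * u x) ∂π) := by
    have h1 : ∫ x, f x * u x ∂π
        ≤ ∫ x, (p/q) * (f x * Real.log (f x) - f x + Real.exp ((q/p) * u x)) ∂π :=
      integral_mono hint_fu (((hint_A.sub hint_f).add hint_B).const_mul _) pointwise
    have hAf : Integrable (fun x => f x * Real.log (f x) - f x) π := hint_A.sub hint_f
    rw [integral_const_mul, integral_add hAf hint_B,
      integral_sub hint_A hint_f, hfint1, entEq] at h1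
    exact h1
  -- Step 4 : bound on ∫ exp((q/p) u) dπ
  set g : X → ℝ := fun y => Real.exp (h y / p) with hg_def
  have hg_meas : Measurable g := Real.measurable_exp.comp (hh.div_const p)
  have hg_nn : ∀ y, 0 ≤ g y := fun y => (Real.exp_pos _).le
  have hg_mem : MemLp g (ENNReal.ofReal p) π := by
    refine MemLp.of_bound hg_meas.aestronglyMeasurable (Real.exp (M / p))
      (Filter.Eventually.of_forall fun y => ?_)
    rw [Real.norm_eq_abs, abs_of_nonneg (hg_nn y)]
    exact Real.exp_le_exp.mpr (by gcongr; exact hub y)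
  set Tg : X → ℝ := fun x => ∫ y, g y ∂(T x) with hTg_def
  have hTg_sm : StronglyMeasurable Tg := by
    have h0 : StronglyMeasurable (Function.uncurry fun (_ : X) (y : X) => g y) :=
      (hg_meas.comp measurable_snd).stronglyMeasurable
    exact h0.integral_kernel_prod_right
  have hHCg : eLpNorm Tg (ENNReal.ofReal q) π ≤ eLpNorm g (ENNReal.ofReal p) π :=
    hHC g hg_meas hg_nn hg_mem
  have hTg_nn : ∀ x, 0 ≤ Tg x := fun x => integral_nonneg hg_nn
  have hint_g : ∀ x : X, Integrable g (T x) := fun x =>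
    (integrable_const (Real.exp (M / p))).mono' hg_meas.aestronglyMeasurable
      (Filter.Eventually.of_forall fun y => by
        rw [Real.norm_eq_abs, abs_of_nonneg (hg_nn y)]
        exact Real.exp_le_exp.mpr (by gcongr; exact hub y))
  have hTg_ub : ∀ x, Tg x ≤ Real.exp (M / p) := fun x => by
    have h1 : ∫ (_ : X), Real.exp (M / p) ∂(T x) = Real.exp (M / p) := by simp
    rw [← h1]
    exact integral_mono (hint_g x) (integrable_const _)
      (fun y => Real.exp_le_exp.mpr (by gcongr; exact hub y))
  have jensen : ∀ x, Real.exp (u x / p) ≤ Tg x := by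
    intro x
    have e : u x / p = ∫ y, (h y / p) ∂(T x) := (integral_div p h).symm
    rw [e]
    exact convexOn_exp.map_integral_le Real.continuous_exp.continuousOn isClosed_univ
      (Filter.Eventually.of_forall fun y => Set.mem_univ _) ((hint_h x).div_const p)
      (hint_g x)
  have pointB : ∀ x, Real.exp ((q/p) * u x) ≤ (Tg x) ^ q := by
    intro x
    have e : Real.exp ((q/p) * u x) = (Real.exp (u x / p)) ^ q := by
      rw [← Real.exp_mul]
      congr 1
      field_simp
    rw [e]
    exact Real.rpow_le_rpow (Real.exp_pos _).le (jensen x) hq0.le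
  have hTgq_meas : Measurable (fun x => (Tg x) ^ q) :=
    (Real.continuous_rpow_const hq0.le).measurable.comp hTg_sm.measurable
  have hTgq_int : Integrable (fun x => (Tg x) ^ q) π := by
    refine (integrable_const (Real.exp (M / p) ^ q)).mono'
      hTgq_meas.aestronglyMeasurable (Filter.Eventually.of_forall fun x => ?_)
    rw [Real.norm_eq_abs, abs_of_nonneg (Real.rpow_nonneg (hTg_nn x) q)]
    exact Real.rpow_le_rpow (hTg_nn x) (hTg_ub x) hq0.le
  have intB_le : ∫ x, Real.exp ((q/p) * u x) ∂π ≤ ∫ x, (Tg x) ^ q ∂π :=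
    integral_mono hint_B hTgq_int pointB
  -- lintegral computations
  have hq_ne : ENNReal.ofReal q ≠ 0 := by
    simp [ENNReal.ofReal_eq_zero, not_le, hq0]
  have hp_ne : ENNReal.ofReal p ≠ 0 := by
    simp [ENNReal.ofReal_eq_zero, not_le, hp0]
  have lhs_eq : ∫ x, (Tg x) ^ q ∂π = (∫⁻ x, (ENNReal.ofReal (Tg x)) ^ q ∂π).toReal := by
    rw [integral_eq_lintegral_of_nonneg_ae
      (Filter.Eventually.of_forall fun x => Real.rpow_nonneg (hTg_nn x) q)
      hTgq_meas.aestronglyMeasurable]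
    congr 1
    refine lintegral_congr fun x => ?_
    rw [ENNReal.ofReal_rpow_of_nonneg (hTg_nn x) hq0.le]
  have lint_Tg : ∫⁻ x, (ENNReal.ofReal (Tg x)) ^ q ∂π
      = (eLpNorm Tg (ENNReal.ofReal q) π) ^ q := by
    rw [eLpNorm_eq_lintegral_rpow_enorm_toReal hq_ne ENNReal.ofReal_ne_top,
      ENNReal.toReal_ofReal hq0.le, ← ENNReal.rpow_mul, one_div_mul_cancel hq0.ne',
      ENNReal.rpow_one]
    refine lintegral_congr fun x => ?_
    rw [Real.enorm_eq_ofReal (hTg_nn x)]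
  have lint_g : eLpNorm g (ENNReal.ofReal p) π
      ≤ (ENNReal.ofReal (1 + Real.exp (-N))) ^ (1/p) := by
    rw [eLpNorm_eq_lintegral_rpow_enorm_toReal hp_ne ENNReal.ofReal_ne_top,
      ENNReal.toReal_ofReal hp0.le]
    refine ENNReal.rpow_le_rpow ?_ (by positivity)
    have e : ∀ x, (‖g x‖ₑ) ^ p = ENNReal.ofReal (Real.exp (h x)) := by
      intro x
      rw [Real.enorm_eq_ofReal (hg_nn x),
        ENNReal.ofReal_rpow_of_nonneg (hg_nn x) hp0.le]
      congr 1
      show Real.exp (h x / p) ^ p = _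
      rw [← Real.exp_mul, div_mul_cancel₀ _ hp0.ne']
    rw [lintegral_congr e]
    exact hexp
  have final_B : ∫ x, Real.exp ((q/p) * u x) ∂π ≤ (1 + Real.exp (-N)) ^ (q/p) := by
    have c1 : (∫⁻ x, (ENNReal.ofReal (Tg x)) ^ q ∂π)
        ≤ (ENNReal.ofReal (1 + Real.exp (-N))) ^ (q/p) := by
      rw [lint_Tg]
      calc (eLpNorm Tg (ENNReal.ofReal q) π) ^ q
          ≤ (eLpNorm g (ENNReal.ofReal p) π) ^ q := ENNReal.rpow_le_rpow hHCg hq0.le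
        _ ≤ ((ENNReal.ofReal (1 + Real.exp (-N))) ^ (1/p)) ^ q :=
            ENNReal.rpow_le_rpow lint_g hq0.le
        _ = (ENNReal.ofReal (1 + Real.exp (-N))) ^ (q/p) := by
            rw [← ENNReal.rpow_mul]
            congr 1
            field_simp
    calc ∫ x, Real.exp ((q/p) * u x) ∂π ≤ ∫ x, (Tg x) ^ q ∂π := intB_le
      _ = (∫⁻ x, (ENNReal.ofReal (Tg x)) ^ q ∂π).toReal := lhs_eq
      _ ≤ ((ENNReal.ofReal (1 + Real.exp (-N))) ^ (q/p)).toReal := by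
          refine ENNReal.toReal_mono ?_ c1
          exact ENNReal.rpow_ne_top_of_nonneg (by positivity) ENNReal.ofReal_ne_top
      _ = (1 + Real.exp (-N)) ^ (q/p) := by
          rw [← ENNReal.toReal_rpow, ENNReal.toReal_ofReal (by positivity)]
  -- combine
  rw [key1, key2]
  calc ∫ x, f x * u x ∂π
      ≤ (p/q) * (∫ x, llr μ π x ∂μ - 1 + ∫ x, Real.exp ((q/p) * u x) ∂π) := int_ineq
    _ ≤ (p/q) * (∫ x, llr μ π x ∂μ - 1 + (1 + Real.exp (-N)) ^ (q/p)) := by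
        refine mul_le_mul_of_nonneg_left ?_ (by positivity)
        linarith [final_B]

private lemma neg_log_mul_le {t : ℝ} (ht : 0 ≤ t) : t * max (-Real.log t) 0 ≤ 1 := by
  rcases ht.eq_or_lt with h | h
  · simp [← h]
  rcases le_total (Real.log t) 0 with hl | hl
  · have hmax : max (-Real.log t) 0 = -Real.log t := max_eq_left (by linarith)
    rw [hmax]
    have h1 : Real.log t⁻¹ ≤ t⁻¹ - 1 := Real.log_le_sub_one_of_pos (by positivity)
    rw [Real.log_inv] at h1
    have h2 : t * (-Real.log t) ≤ t * (t⁻¹ - 1) := mul_le_mul_of_nonneg_left h1 ht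
    have h3 : t * (t⁻¹ - 1) = 1 - t := by field_simp
    nlinarith
  · have hmax : max (-Real.log t) 0 = 0 := max_eq_right (by linarith)
    rw [hmax]; simp

private lemma bind_ac {X : Type*} [MeasurableSpace X] {π : Measure X}
    (T : Kernel X X) (hstat : π.bind (fun x => T x) = π)
    {μ : Measure X} (hac : μ ≪ π) :
    μ.bind (fun x => T x) ≪ π := by
  refine Measure.AbsolutelyContinuous.mk (fun s hs h0 => ?_)
  have h1 : ∫⁻ x, T x s ∂π = 0 := by
    rw [← Measure.bind_apply hs T.measurable.aemeasurable, hstat]; exact h0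
  have h2 : (fun x => T x s) =ᵐ[π] 0 := by
    rwa [lintegral_eq_zero_iff (T.measurable_coe hs)] at h1
  rw [Measure.bind_apply hs T.measurable.aemeasurable,
    lintegral_eq_zero_iff (T.measurable_coe hs)]
  exact h2.filter_mono hac.ae_le

private lemma one_step {X : Type*} [MeasurableSpace X] (π : Measure X) [IsProbabilityMeasure π]
    (T : Kernel X X) [IsMarkovKernel T]
    (hstat : π.bind (fun x => T x) = π)
    (p q : ℝ) (hp : 1 ≤ p) (hpq : p ≤ q)
    (hHC : ∀ g : X → ℝ, Measurable g → (∀ x, 0 ≤ g x) → MemLp g (ENNReal.ofReal p) π →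
      eLpNorm (fun x => ∫ y, g y ∂(T x)) (ENNReal.ofReal q) π ≤ eLpNorm g (ENNReal.ofReal p) π)
    (μ : Measure X) [IsProbabilityMeasure μ] (hac : μ ≪ π)
    (hint : Integrable (llr μ π) μ) :
    (μ.bind (fun x => T x)) ≪ π ∧
      Integrable (llr (μ.bind (fun x => T x)) π) (μ.bind (fun x => T x)) ∧
      ∫ x, llr (μ.bind (fun x => T x)) π x ∂(μ.bind (fun x => T x))
        ≤ (p/q) * ∫ x, llr μ π x ∂μ := by
  have hp0 : (0:ℝ) < p := lt_of_lt_of_le one_pos hp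
  have hq0 : (0:ℝ) < q := lt_of_lt_of_le hp0 hpq
  set ν := μ.bind (fun x => T x) with hν
  haveI : IsProbabilityMeasure ν := bind_isProb T μ
  have hacν : ν ≪ π := bind_ac T hstat hac
  set Ent := ∫ x, llr μ π x ∂μ with hEnt
  set c : ℕ → ℝ := fun N => (p/q) * (Ent - 1 + (1 + Real.exp (-(N:ℝ))) ^ (q/p)) with hc
  refine ⟨hacν, ?_⟩
  set L : X → ℝ := llr ν π with hL
  have hL_meas : Measurable L := measurable_llr ν π
  have hd_meas : Measurable (fun x => (ν.rnDeriv π x).toReal) :=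
    (Measure.measurable_rnDeriv ν π).ennreal_toReal
  have hpos : ∀ᵐ x ∂ν, 0 < (ν.rnDeriv π x).toReal := by
    filter_upwards [Measure.rnDeriv_pos hacν,
      hacν.ae_le (Measure.rnDeriv_lt_top ν π)] with x h1 h2
    exact ENNReal.toReal_pos h1.ne' h2.ne
  -- entropy bound for the doubly-truncated modification
  have trunc_bound : ∀ (N : ℕ) (M : ℝ),
      ∫ x, (if (ν.rnDeriv π x).toReal = 0 then -(N:ℝ)
            else max (-(N:ℝ)) (min (L x) M)) ∂ν ≤ c N := by
    intro N M
    set h : X → ℝ := fun x => if (ν.rnDeriv π x).toReal = 0 then -(N:ℝ)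
      else max (-(N:ℝ)) (min (L x) M) with hh_def
    have hNnn : (0:ℝ) ≤ (N:ℝ) := Nat.cast_nonneg N
    have hh_meas : Measurable h := by
      refine Measurable.ite (hd_meas (measurableSet_singleton 0)) measurable_const ?_
      exact measurable_const.max (hL_meas.min measurable_const)
    have hlb : ∀ x, -(N:ℝ) ≤ h x := by
      intro x
      by_cases hx : (ν.rnDeriv π x).toReal = 0 <;> simp [hh_def, hx, le_max_left]
    have hub : ∀ x, h x ≤ max M 0 := by
      intro x
      by_cases hx : (ν.rnDeriv π x).toReal = 0
      · simp only [hh_def, hx, if_true]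
        have h1 : -(N:ℝ) ≤ 0 := by linarith
        exact le_trans h1 (le_max_right _ _)
      · simp only [hh_def, hx, if_false]
        refine max_le (le_trans (by linarith) (le_max_right M 0)) ?_
        exact le_trans (min_le_right _ _) (le_max_left _ _)
    have hexp : ∫⁻ x, ENNReal.ofReal (Real.exp (h x)) ∂π
        ≤ ENNReal.ofReal (1 + Real.exp (-(N:ℝ))) := by
      have hptwise : ∀ᵐ x ∂π, ENNReal.ofReal (Real.exp (h x))
          ≤ ENNReal.ofReal (Real.exp (-(N:ℝ))) + ν.rnDeriv π x := by
        filter_upwards [Measure.rnDeriv_lt_top ν π] with x hx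
        by_cases h0 : (ν.rnDeriv π x).toReal = 0
        · simp only [hh_def, h0, if_true]
          exact le_add_right le_rfl
        · simp only [hh_def, h0, if_false]
          set t := (ν.rnDeriv π x).toReal with ht
          have htpos : 0 < t := lt_of_le_of_ne ENNReal.toReal_nonneg (Ne.symm h0)
          have hrn : ν.rnDeriv π x = ENNReal.ofReal t := (ENNReal.ofReal_toReal hx.ne).symm
          have hhx : max (-(N:ℝ)) (min (L x) M) ≤ max (-(N:ℝ)) (Real.log t) := by
            refine max_le_max le_rfl ?_
            exact le_trans (min_le_left _ _) (le_of_eq rfl)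
          have hexp1 : Real.exp (max (-(N:ℝ)) (min (L x) M))
              ≤ Real.exp (-(N:ℝ)) + t := by
            rcases max_cases (-(N:ℝ)) (Real.log t) with ⟨he, _⟩ | ⟨he, _⟩
            · calc Real.exp (max (-(N:ℝ)) (min (L x) M))
                  ≤ Real.exp (max (-(N:ℝ)) (Real.log t)) := Real.exp_le_exp.mpr hhx
                _ = Real.exp (-(N:ℝ)) := by rw [he]
                _ ≤ Real.exp (-(N:ℝ)) + t := by linarith
            · calc Real.exp (max (-(N:ℝ)) (min (L x) M))
                  ≤ Real.exp (max (-(N:ℝ)) (Real.log t)) := Real.exp_le_exp.mpr hhx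
                _ = Real.exp (Real.log t) := by rw [he]
                _ = t := Real.exp_log htpos
                _ ≤ Real.exp (-(N:ℝ)) + t := by linarith [Real.exp_pos (-(N:ℝ))]
          calc ENNReal.ofReal (Real.exp (max (-(N:ℝ)) (min (L x) M)))
              ≤ ENNReal.ofReal (Real.exp (-(N:ℝ)) + t) := ENNReal.ofReal_le_ofReal hexp1
            _ = ENNReal.ofReal (Real.exp (-(N:ℝ))) + ENNReal.ofReal t :=
                ENNReal.ofReal_add (Real.exp_pos _).le ENNReal.toReal_nonneg
            _ = ENNReal.ofReal (Real.exp (-(N:ℝ))) + ν.rnDeriv π x := by rw [hrn]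
      calc ∫⁻ x, ENNReal.ofReal (Real.exp (h x)) ∂π
          ≤ ∫⁻ x, (ENNReal.ofReal (Real.exp (-(N:ℝ))) + ν.rnDeriv π x) ∂π :=
            lintegral_mono_ae hptwise
        _ = ENNReal.ofReal (Real.exp (-(N:ℝ))) + ∫⁻ x, ν.rnDeriv π x ∂π := by
            rw [lintegral_add_left measurable_const, lintegral_const, measure_univ, mul_one]
        _ ≤ ENNReal.ofReal (Real.exp (-(N:ℝ))) + 1 := by
            refine add_le_add_right ?_ _
            refine le_trans (Measure.lintegral_rnDeriv_le) ?_
            simp [measure_univ]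
        _ = ENNReal.ofReal (1 + Real.exp (-(N:ℝ))) := by
            rw [ENNReal.ofReal_add (by norm_num) (Real.exp_pos _).le]
            rw [ENNReal.ofReal_one, add_comm]
    exact core π T p q hp hpq hHC μ hac hint (N:ℝ) (max M 0) h hh_meas hlb hub hexp
  -- monotone convergence in M
  have claimB : ∀ N : ℕ, Integrable (fun x => max (-(N:ℝ)) (L x)) ν ∧
      ∫ x, max (-(N:ℝ)) (L x) ∂ν ≤ c N := by
    intro N
    have hNnn : (0:ℝ) ≤ (N:ℝ) := Nat.cast_nonneg N
    set ρ : ℕ → X → ℝ≥0∞ :=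
      fun m x => ENNReal.ofReal (max (-(N:ℝ)) (min (L x) (m:ℝ)) + N) with hρ
    have hρ_meas : ∀ m, Measurable (ρ m) := fun m =>
      ((measurable_const.max (hL_meas.min measurable_const)).add measurable_const).ennreal_ofReal
    have hρ_mono : Monotone ρ := by
      intro m m' hmm' x
      apply ENNReal.ofReal_le_ofReal
      have h1 : min (L x) (m:ℝ) ≤ min (L x) (m':ℝ) :=
        min_le_min le_rfl (by exact_mod_cast hmm')
      have h2 := max_le_max (le_refl (-(N:ℝ))) h1
      linarith
    have hsup : ∀ x, ⨆ m, ρ m x = ENNReal.ofReal (max (-(N:ℝ)) (L x) + N) := by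
      intro x
      apply le_antisymm
      · refine iSup_le fun m => ENNReal.ofReal_le_ofReal ?_
        have h1 : min (L x) (m:ℝ) ≤ L x := min_le_left _ _
        have h2 := max_le_max (le_refl (-(N:ℝ))) h1
        linarith
      · have hm : L x ≤ (⌈L x⌉₊ : ℝ) := Nat.le_ceil _
        have he : ρ ⌈L x⌉₊ x = ENNReal.ofReal (max (-(N:ℝ)) (L x) + N) := by
          simp only [hρ]
          rw [min_eq_left hm]
        rw [← he]
        exact le_iSup (fun m => ρ m x) _
    have hMCT : ∫⁻ x, ENNReal.ofReal (max (-(N:ℝ)) (L x) + N) ∂ν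
        = ⨆ m, ∫⁻ x, ρ m x ∂ν := by
      rw [← lintegral_iSup hρ_meas hρ_mono]
      exact lintegral_congr fun x => (hsup x).symm
    have hbound : ∀ m : ℕ, ∫⁻ x, ρ m x ∂ν ≤ ENNReal.ofReal (c N + N) := by
      intro m
      set h : X → ℝ := fun x => if (ν.rnDeriv π x).toReal = 0 then -(N:ℝ)
        else max (-(N:ℝ)) (min (L x) (m:ℝ)) with hh_def
      have hh_meas : Measurable h := by
        refine Measurable.ite (hd_meas (measurableSet_singleton 0)) measurable_const ?_
        exact measurable_const.max (hL_meas.min measurable_const)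
      have hlb : ∀ x, -(N:ℝ) ≤ h x := by
        intro x
        by_cases hx : (ν.rnDeriv π x).toReal = 0 <;> simp [hh_def, hx, le_max_left]
      have hub : ∀ x, h x ≤ max (m:ℝ) 0 := by
        intro x
        by_cases hx : (ν.rnDeriv π x).toReal = 0
        · simp only [hh_def, hx, if_true]
          exact le_trans (by linarith) (le_max_right (m:ℝ) 0)
        · simp only [hh_def, hx, if_false]
          refine max_le (le_trans (by linarith) (le_max_right (m:ℝ) 0)) ?_
          exact le_trans (min_le_right _ _) (le_max_left _ _)
      have hint_h : Integrable h ν := by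
        refine (integrable_const (max (m:ℝ) 0 + N)).mono' hh_meas.aestronglyMeasurable
          (Filter.Eventually.of_forall fun x => ?_)
        rw [Real.norm_eq_abs, abs_le]
        constructor
        · have := hlb x
          have h0 : (0:ℝ) ≤ max (m:ℝ) 0 := le_max_right _ _
          linarith
        · have := hub x
          linarith
      have hint_hN : Integrable (fun x => h x + N) ν := hint_h.add (integrable_const _)
      have hnn' : ∀ x, (0:ℝ) ≤ h x + N := fun x => by linarith [hlb x]
      have hnn : 0 ≤ᵐ[ν] (fun x => h x + N) := Filter.Eventually.of_forall hnn'
      have hae : ρ m =ᵐ[ν] fun x => ENNReal.ofReal (h x + N) := by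
        filter_upwards [hpos] with x hx
        simp only [hρ, hh_def, hx.ne', if_false]
      have he : ∫⁻ x, ρ m x ∂ν = ENNReal.ofReal (∫ x, (h x + N) ∂ν) := by
        rw [lintegral_congr_ae hae,
          ← ofReal_integral_eq_lintegral_ofReal hint_hN hnn]
      rw [he]
      apply ENNReal.ofReal_le_ofReal
      rw [integral_add hint_h (integrable_const _)]
      simp only [integral_const, measure_univ, ENNReal.toReal_one, probReal_univ, one_smul, smul_eq_mul,
        one_mul]
      have := trunc_bound N (m:ℝ)
      linarith [this]
    have hfin : ∫⁻ x, ENNReal.ofReal (max (-(N:ℝ)) (L x) + N) ∂ν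
        ≤ ENNReal.ofReal (c N + N) := by
      rw [hMCT]
      exact iSup_le hbound
    have hmeasN : Measurable (fun x => max (-(N:ℝ)) (L x) + N) :=
      (measurable_const.max hL_meas).add measurable_const
    have hnnN : ∀ x, 0 ≤ max (-(N:ℝ)) (L x) + N := fun x => by
      have := le_max_left (-(N:ℝ)) (L x); linarith
    have hintN : Integrable (fun x => max (-(N:ℝ)) (L x) + N) ν := by
      refine ⟨hmeasN.aestronglyMeasurable, ?_⟩
      simp only [HasFiniteIntegral]
      have he : ∫⁻ x, ‖max (-(N:ℝ)) (L x) + N‖ₑ ∂ν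
          = ∫⁻ x, ENNReal.ofReal (max (-(N:ℝ)) (L x) + N) ∂ν :=
        lintegral_congr fun x => Real.enorm_eq_ofReal (hnnN x)
      rw [he]
      exact lt_of_le_of_lt hfin ENNReal.ofReal_lt_top
    have hintmax : Integrable (fun x => max (-(N:ℝ)) (L x)) ν := by
      have h0 := hintN.sub (integrable_const (N:ℝ))
      refine h0.congr (Filter.Eventually.of_forall fun x => ?_)
      simp
    refine ⟨hintmax, ?_⟩
    have he2 : ∫ x, (max (-(N:ℝ)) (L x) + N) ∂ν
        = (∫⁻ x, ENNReal.ofReal (max (-(N:ℝ)) (L x) + N) ∂ν).toReal :=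
      integral_eq_lintegral_of_nonneg_ae (Filter.Eventually.of_forall hnnN)
        hmeasN.aestronglyMeasurable
    have hcN : -(N:ℝ) ≤ c N := by
      set h : X → ℝ := fun x => if (ν.rnDeriv π x).toReal = 0 then -(N:ℝ)
        else max (-(N:ℝ)) (min (L x) (0:ℝ)) with hh_def
      have hh_meas : Measurable h := by
        refine Measurable.ite (hd_meas (measurableSet_singleton 0)) measurable_const ?_
        exact measurable_const.max (hL_meas.min measurable_const)
      have hlb : ∀ x, -(N:ℝ) ≤ h x := by
        intro x
        by_cases hx : (ν.rnDeriv π x).toReal = 0 <;> simp [hh_def, hx, le_max_left]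
      have hub : ∀ x, h x ≤ 0 := by
        intro x
        by_cases hx : (ν.rnDeriv π x).toReal = 0
        · simp only [hh_def, hx, if_true]; linarith
        · simp only [hh_def, hx, if_false]
          exact max_le (by linarith) (min_le_right _ _)
      have hint_h : Integrable h ν := by
        refine (integrable_const ((N:ℝ))).mono' hh_meas.aestronglyMeasurable
          (Filter.Eventually.of_forall fun x => ?_)
        rw [Real.norm_eq_abs, abs_le]
        exact ⟨hlb x, le_trans (hub x) hNnn⟩
      have h1 : ∫ x, (-(N:ℝ)) ∂ν ≤ ∫ x, h x ∂ν :=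
        integral_mono (integrable_const _) hint_h hlb
      simp only [integral_const, measure_univ, ENNReal.toReal_one, probReal_univ, one_smul,
        smul_eq_mul, one_mul] at h1
      linarith [trunc_bound N 0, h1]
    have he3 : ∫ x, (max (-(N:ℝ)) (L x) + N) ∂ν ≤ c N + N := by
      rw [he2]
      refine le_trans (ENNReal.toReal_mono ENNReal.ofReal_ne_top hfin) ?_
      rw [ENNReal.toReal_ofReal (by linarith)]
    rw [integral_add hintmax (integrable_const _)] at he3
    simp only [integral_const, measure_univ, ENNReal.toReal_one, probReal_univ, one_smul, smul_eq_mul,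
      one_mul] at he3
    linarith
  -- integrability of the negative part
  have hnegmeas : Measurable (fun x => max (-(L x)) 0) := hL_meas.neg.max measurable_const
  have hneg : Integrable (fun x => max (-(L x)) 0) ν := by
    have key : ∫⁻ x, ENNReal.ofReal (max (-(L x)) 0) ∂ν ≤ 1 := by
      rw [← MeasureTheory.lintegral_rnDeriv_mul hacν hnegmeas.ennreal_ofReal.aemeasurable]
      calc ∫⁻ x, ν.rnDeriv π x * ENNReal.ofReal (max (-(L x)) 0) ∂π
          ≤ ∫⁻ _, 1 ∂π := by
            refine lintegral_mono_ae ?_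
            filter_upwards [Measure.rnDeriv_lt_top ν π] with x hx
            have h1 : ν.rnDeriv π x = ENNReal.ofReal ((ν.rnDeriv π x).toReal) :=
              (ENNReal.ofReal_toReal hx.ne).symm
            rw [h1, ← ENNReal.ofReal_mul ENNReal.toReal_nonneg]
            calc ENNReal.ofReal ((ν.rnDeriv π x).toReal * max (-(L x)) 0)
                ≤ ENNReal.ofReal 1 :=
                  ENNReal.ofReal_le_ofReal (neg_log_mul_le ENNReal.toReal_nonneg)
              _ = 1 := ENNReal.ofReal_one
        _ = 1 := by simp [measure_univ]
    refine ⟨hnegmeas.aestronglyMeasurable, ?_⟩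
    simp only [HasFiniteIntegral]
    have he : ∫⁻ x, ‖max (-(L x)) 0‖ₑ ∂ν
        = ∫⁻ x, ENNReal.ofReal (max (-(L x)) 0) ∂ν :=
      lintegral_congr fun x => Real.enorm_eq_ofReal (le_max_right _ _)
    rw [he]
    exact lt_of_le_of_lt key ENNReal.one_lt_top
  -- integrability of llr ν π
  have hLint : Integrable L ν := by
    have h0 := (claimB 0).1
    have hsub := h0.sub hneg
    refine hsub.congr (Filter.Eventually.of_forall fun x => ?_)
    simp only [Pi.sub_apply, Nat.cast_zero, neg_zero]
    rcases le_total (L x) 0 with h1 | h1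
    · rw [max_eq_left h1, max_eq_left (neg_nonneg.mpr h1)]
      ring
    · rw [max_eq_right h1, max_eq_right (neg_nonpos.mpr h1)]
      ring
  refine ⟨hLint, ?_⟩
  have hLe : ∀ N : ℕ, ∫ x, L x ∂ν ≤ c N := fun N =>
    le_trans (integral_mono hLint (claimB N).1 (fun x => le_max_right _ _)) (claimB N).2
  have hlim : Filter.Tendsto c Filter.atTop (nhds ((p/q) * Ent)) := by
    have h1 : Filter.Tendsto (fun N : ℕ => Real.exp (-(N:ℝ))) Filter.atTop (nhds 0) :=
      Real.tendsto_exp_atBot.comp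
        (Filter.tendsto_neg_atTop_atBot.comp tendsto_natCast_atTop_atTop)
    have h2 : Filter.Tendsto (fun N : ℕ => (1 + Real.exp (-(N:ℝ))) ^ (q/p))
        Filter.atTop (nhds 1) := by
      have h3 : Filter.Tendsto (fun N : ℕ => (1 + Real.exp (-(N:ℝ))) ^ (q/p))
          Filter.atTop (nhds (((1:ℝ) + 0) ^ (q/p))) :=
        (tendsto_const_nhds.add h1).rpow_const (Or.inl (by norm_num))
      simpa using h3
    have h4 : Filter.Tendsto c Filter.atTop (nhds ((p/q) * (Ent - 1 + 1))) :=
      ((tendsto_const_nhds.add h2)).const_mul _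
    have h5 : (p/q) * (Ent - 1 + 1) = (p/q) * Ent := by ring
    rwa [h5] at h4
  exact ge_of_tendsto hlim (Filter.Eventually.of_forall hLe)

/-- Kullback-Leibler divergence `H(μ | π)`, valued in `[0, ∞]`: equal to
`∫ log (dμ/dπ) dμ` when `μ ≪ π` and this integral makes sense, and `+∞` otherwise. -/
noncomputable def klDiv {X : Type*} [MeasurableSpace X] (μ π : Measure X) : ℝ≥0∞ :=
  if μ ≪ π ∧ Integrable (llr μ π) μ then ENNReal.ofReal (∫ x, llr μ π x ∂μ) else ∞

/-- Iterating the one-step entropy contraction: hyper-contractivity `‖Tg‖_q ≤ ‖g‖_p`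
implies `H(μTⁿ | π) ≤ (p/q)ⁿ H(μ | π)` for every `n`. -/
theorem hypercontractivity_iterated_entropy_contraction
    {X : Type*} [MeasurableSpace X] (π : Measure X) [IsProbabilityMeasure π]
    (T : Kernel X X) [IsMarkovKernel T]
    (hstat : π.bind (fun x => T x) = π)
    (p q : ℝ) (hp : 1 ≤ p) (hpq : p ≤ q)
    (hHC : ∀ g : X → ℝ, Measurable g → (∀ x, 0 ≤ g x) → MemLp g (ENNReal.ofReal p) π →
      eLpNorm (fun x => ∫ y, g y ∂(T x)) (ENNReal.ofReal q) π ≤ eLpNorm g (ENNReal.ofReal p) π)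
    (μ : Measure X) [IsProbabilityMeasure μ] (n : ℕ) :
    klDiv ((fun ν : Measure X => ν.bind (fun x => T x))^[n] μ) π
      ≤ ENNReal.ofReal ((p / q) ^ n) * klDiv μ π := by
  have hp0 : (0:ℝ) < p := lt_of_lt_of_le one_pos hp
  have hq0 : (0:ℝ) < q := lt_of_lt_of_le hp0 hpq
  have hpq0 : (0:ℝ) < p / q := div_pos hp0 hq0
  have kl_def : ∀ (μ' π' : Measure X), klDiv μ' π'
      = if μ' ≪ π' ∧ Integrable (llr μ' π') μ' then
          ENNReal.ofReal (∫ x, llr μ' π' x ∂μ') else ∞ := fun _ _ => rfl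
  have hprob : ∀ m : ℕ,
      IsProbabilityMeasure ((fun ν : Measure X => ν.bind (fun x => T x))^[m] μ) := by
    intro m
    induction m with
    | zero => simpa using (inferInstance : IsProbabilityMeasure μ)
    | succ m ihm =>
      rw [Function.iterate_succ_apply']
      exact @bind_isProb X _ T _ _ ihm
  induction n with
  | zero => simp
  | succ n ih =>
    rcases eq_or_ne (klDiv μ π) ⊤ with htop | htop
    · rw [htop, ENNReal.mul_top (ENNReal.ofReal_pos.mpr (pow_pos hpq0 (n+1))).ne']
      exact le_top
    · have hn_ne : klDiv ((fun ν : Measure X => ν.bind (fun x => T x))^[n] μ) π ≠ ⊤ :=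
        ne_top_of_le_ne_top (ENNReal.mul_ne_top ENNReal.ofReal_ne_top htop) ih
      set μn := (fun ν : Measure X => ν.bind (fun x => T x))^[n] μ with hμn
      haveI : IsProbabilityMeasure μn := hprob n
      have hcond : μn ≪ π ∧ Integrable (llr μn π) μn := by
        by_contra hcon
        rw [kl_def, if_neg hcon] at hn_ne
        exact hn_ne rfl
      obtain ⟨hacn, hintn⟩ := hcond
      obtain ⟨hac', hint', hle⟩ := one_step π T hstat p q hp hpq hHC μn hacn hintn
      have hkl_n : klDiv μn π = ENNReal.ofReal (∫ x, llr μn π x ∂μn) := by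
        rw [kl_def, if_pos ⟨hacn, hintn⟩]
      have hkl_s : klDiv (μn.bind (fun x => T x)) π
          = ENNReal.ofReal
            (∫ x, llr (μn.bind (fun x => T x)) π x ∂(μn.bind (fun x => T x))) := by
        rw [kl_def, if_pos ⟨hac', hint'⟩]
      have hgoal : klDiv (μn.bind (fun x => T x)) π
          ≤ ENNReal.ofReal ((p / q) ^ (n+1)) * klDiv μ π := by
        calc klDiv (μn.bind (fun x => T x)) π
            ≤ ENNReal.ofReal ((p/q) * ∫ x, llr μn π x ∂μn) := by
              rw [hkl_s]; exact ENNReal.ofReal_le_ofReal hle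
          _ = ENNReal.ofReal (p/q) * klDiv μn π := by
              rw [hkl_n, ENNReal.ofReal_mul hpq0.le]
          _ ≤ ENNReal.ofReal (p/q) * (ENNReal.ofReal ((p/q)^n) * klDiv μ π) :=
              mul_le_mul_right ih _
          _ = ENNReal.ofReal ((p/q) * (p/q)^n) * klDiv μ π := by
              rw [← mul_assoc, ← ENNReal.ofReal_mul hpq0.le]
          _ = ENNReal.ofReal ((p/q)^(n+1)) * klDiv μ π := by
              rw [← pow_succ']
      rw [Function.iterate_succ_apply']
      exact hgoal
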